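/- Define F(n) = c + (r − d·exp(α(u − γn)))·n and assume d·e^(αu) > r (equivalently u > (1/α)·ln(r/d)). Then there exists a unique n̄ > 0 with F′(n̄) = 0; moreover n̄ < 2/(αγ), F is strictly decreasing on [0, n̄], strictly increasing on [n̄, ∞), and F(n) ≥ F(n̄) for all n ≥ 0. -/

import Mathlib

/-!
`F' = r + d (αγn − 1) e^{α(u−γn)}` has derivative `d αγ (2 − αγn) e^{α(u−γn)}`, so it is
strictly increasing up to `2/(αγ)`. It starts at `r − d e^{αu} < 0` and is `≥ r > 0` as soon as
`αγn ≥ 1`, hence it has exactly one positive zero `n̄ < 1/(αγ)`, negative before and positive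
after it; this sign pattern gives the monotonicity of `F` and its minimum at `n̄`.
-/

/-- The right-hand side of the deterministic limiting bond equation. -/
noncomputable def Fb (α γ u c r d : ℝ) : ℝ → ℝ :=
  fun n => c + (r - d * Real.exp (α * (u - γ * n))) * n

open Set

noncomputable def Fb' (α γ u r d : ℝ) : ℝ → ℝ :=
  fun n => r + d * (α * γ * n - 1) * Real.exp (α * (u - γ * n))

lemma hasDerivAt_exp_mul_sub (α γ u n : ℝ) :
    HasDerivAt (fun x : ℝ => Real.exp (α * (u - γ * x)))
      (-(α * γ) * Real.exp (α * (u - γ * n))) n := by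
  refine ((((hasDerivAt_id' n).const_mul γ).const_sub u).const_mul α).exp.congr_deriv ?_
  ring

lemma hasDerivAt_Fb (α γ u c r d n : ℝ) :
    HasDerivAt (Fb α γ u c r d) (Fb' α γ u r d n) n := by
  refine ((((hasDerivAt_exp_mul_sub α γ u n).const_mul d).const_sub r).mul
    (hasDerivAt_id' n) |>.const_add c).congr_deriv ?_
  simp only [Fb']
  ring

lemma hasDerivAt_Fb' (α γ u r d n : ℝ) :
    HasDerivAt (Fb' α γ u r d)
      (d * (α * γ) * (2 - α * γ * n) * Real.exp (α * (u - γ * n))) n := by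
  have hlin := (((hasDerivAt_id' n).const_mul (α * γ)).sub_const 1).const_mul d
  refine ((hlin.mul (hasDerivAt_exp_mul_sub α γ u n)).const_add r).congr_deriv ?_
  ring

lemma continuous_Fb' (α γ u r d : ℝ) : Continuous (Fb' α γ u r d) :=
  continuous_iff_continuousAt.mpr fun n => (hasDerivAt_Fb' α γ u r d n).continuousAt

lemma Fb'_zero (α γ u r d : ℝ) : Fb' α γ u r d 0 = r - d * Real.exp (α * u) := by
  simp only [Fb', mul_zero, sub_zero, zero_sub]
  ring

lemma le_Fb' {α γ u r d n : ℝ} (hd : 0 ≤ d) (hn : 1 ≤ α * γ * n) : r ≤ Fb' α γ u r d n := by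
  have : 0 ≤ d * (α * γ * n - 1) * Real.exp (α * (u - γ * n)) := by
    have : 0 ≤ α * γ * n - 1 := by linarith
    positivity
  simp only [Fb']
  linarith

lemma strictMonoOn_Fb' {α γ u r d : ℝ} (hαγ : 0 < α * γ) (hd : 0 < d) :
    StrictMonoOn (Fb' α γ u r d) (Iic (2 / (α * γ))) := by
  refine strictMonoOn_of_deriv_pos (convex_Iic _) (continuous_Fb' α γ u r d).continuousOn ?_
  intro n hn
  rw [interior_Iic, mem_Iio, lt_div_iff₀ hαγ] at hn
  rw [(hasDerivAt_Fb' α γ u r d n).deriv]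
  have : 0 < 2 - α * γ * n := by linarith
  positivity

lemma exists_mem_Ioo_sign_change {g : ℝ → ℝ} {a b : ℝ} (hab : a ≤ b)
    (hcont : ContinuousOn g (Icc a b)) (hmono : StrictMonoOn g (Icc a b))
    (ha : g a < 0) (hb : 0 < g b) (hpos : ∀ x, b < x → 0 < g x) :
    ∃ z ∈ Ioo a b, g z = 0 ∧ (∀ x, a ≤ x → x < z → g x < 0) ∧ ∀ x, z < x → 0 < g x := by
  obtain ⟨z, hz, hgz⟩ := intermediate_value_Ioo hab hcont ⟨ha, hb⟩
  refine ⟨z, hz, hgz, fun x hax hxz => ?_, fun x hzx => ?_⟩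
  · exact hgz ▸ hmono ⟨hax, by linarith [hz.2]⟩ (Ioo_subset_Icc_self hz) hxz
  · rcases le_or_gt x b with hxb | hbx
    · exact hgz ▸ hmono (Ioo_subset_Icc_self hz) ⟨by linarith [hz.1], hxb⟩ hzx
    · exact hpos x hbx

lemma le_of_strictAntiOn_Icc_of_strictMonoOn_Ici {f : ℝ → ℝ} {a z : ℝ} (haz : a ≤ z)
    (hanti : StrictAntiOn f (Icc a z)) (hmono : StrictMonoOn f (Ici z)) :
    ∀ x, a ≤ x → f z ≤ f x := by
  intro x hax
  rcases le_total x z with hxz | hzx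
  · exact hanti.antitoneOn ⟨hax, hxz⟩ ⟨haz, le_rfl⟩ hxz
  · exact hmono.monotoneOn self_mem_Ici hzx hzx

lemma exists_Fb'_sign_change {α γ u r d : ℝ} (hαγ : 0 < α * γ) (hr : 0 < r) (hd : 0 < d)
    (h : r < d * Real.exp (α * u)) :
    ∃ nbar ∈ Ioo 0 (1 / (α * γ)), Fb' α γ u r d nbar = 0 ∧
      (∀ x, 0 ≤ x → x < nbar → Fb' α γ u r d x < 0) ∧ ∀ x, nbar < x → 0 < Fb' α γ u r d x := by
  have hinv_le : 1 / (α * γ) ≤ 2 / (α * γ) := div_le_div_of_nonneg_right one_le_two hαγ.le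
  refine exists_mem_Ioo_sign_change (by positivity) (continuous_Fb' α γ u r d).continuousOn
    ((strictMonoOn_Fb' hαγ hd).mono (Icc_subset_Iic_self.trans (Iic_subset_Iic.mpr hinv_le)))
    (by rw [Fb'_zero]; linarith)
    (hr.trans_le (le_Fb' hd.le (by rw [mul_one_div_cancel hαγ.ne'])))
    fun x hx => hr.trans_le <| le_Fb' hd.le ((div_le_iff₀' hαγ).mp hx.le)

theorem stmt_7_general (α γ u c r d : ℝ) (hα : 0 < α) (hγ : 0 < γ)
    (hr : 0 < r) (hd : 0 < d)
    (h : r < d * Real.exp (α * u)) :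
    ∃ nbar : ℝ, 0 < nbar ∧ deriv (Fb α γ u c r d) nbar = 0 ∧
      (∀ m : ℝ, 0 < m → deriv (Fb α γ u c r d) m = 0 → m = nbar) ∧
      nbar < 2 / (α * γ) ∧
      StrictAntiOn (Fb α γ u c r d) (Set.Icc 0 nbar) ∧
      StrictMonoOn (Fb α γ u c r d) (Set.Ici nbar) ∧
      ∀ n : ℝ, 0 ≤ n → Fb α γ u c r d nbar ≤ Fb α γ u c r d n := by
  have hαγ : 0 < α * γ := mul_pos hα hγ
  have hderiv : deriv (Fb α γ u c r d) = Fb' α γ u r d :=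
    funext fun n => (hasDerivAt_Fb α γ u c r d n).deriv
  have hcont : Continuous (Fb α γ u c r d) :=
    continuous_iff_continuousAt.mpr fun n => (hasDerivAt_Fb α γ u c r d n).continuousAt
  obtain ⟨nbar, hnbar, hzero, hneg, hpos⟩ := exists_Fb'_sign_change hαγ hr hd h
  have hanti : StrictAntiOn (Fb α γ u c r d) (Icc 0 nbar) := by
    refine strictAntiOn_of_deriv_neg (convex_Icc _ _) hcont.continuousOn fun x hx => ?_
    rw [interior_Icc] at hx
    exact hderiv ▸ hneg x hx.1.le hx.2
  have hmono : StrictMonoOn (Fb α γ u c r d) (Ici nbar) := by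
    refine strictMonoOn_of_deriv_pos (convex_Ici _) hcont.continuousOn fun x hx => ?_
    rw [interior_Ici] at hx
    exact hderiv ▸ hpos x hx
  refine ⟨nbar, hnbar.1, hderiv ▸ hzero, fun m hm hdm => ?_,
    hnbar.2.trans (div_lt_div_of_pos_right one_lt_two hαγ), hanti, hmono, le_of_strictAntiOn_Icc_of_strictMonoOn_Ici hnbar.1.le hanti hmono⟩
  rw [hderiv] at hdm
  rcases lt_trichotomy m nbar with hlt | heq | hgt
  · exact absurd hdm (hneg m hm.le hlt).ne
  · exact heq
  · exact absurd hdm (hpos m hgt).ne'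

/-- If `d·e^(αu) > r`, then `F` has a unique positive critical point `n̄`;
moreover `n̄ < 2/(αγ)`, `F` is strictly decreasing on `[0,n̄]`, strictly
increasing on `[n̄,∞)`, and `F(n) ≥ F(n̄)` for all `n ≥ 0`. -/
theorem stmt_7 (α γ u c r d : ℝ) (hα : 0 < α) (hγ : 0 < γ) (hu : 0 < u)
    (hc : 0 < c) (hr : 0 < r) (hd : 0 < d)
    (h : r < d * Real.exp (α * u)) :
    ∃ nbar : ℝ, 0 < nbar ∧ deriv (Fb α γ u c r d) nbar = 0 ∧
      (∀ m : ℝ, 0 < m → deriv (Fb α γ u c r d) m = 0 → m = nbar) ∧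
      nbar < 2 / (α * γ) ∧
      StrictAntiOn (Fb α γ u c r d) (Set.Icc 0 nbar) ∧
      StrictMonoOn (Fb α γ u c r d) (Set.Ici nbar) ∧
      ∀ n : ℝ, 0 ≤ n → Fb α γ u c r d nbar ≤ Fb α γ u c r d n :=
  stmt_7_general α γ u c r d hα hγ hr hd h
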